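/- Suppose 0 < ℓ₁ < ℓ₂ < m/2 and 0 ≤ s ≤ m-1 are integers and q ≥ 2. Then q^s(q^{ℓ₁} + 1) is not congruent to q^{ℓ₂} + 1 modulo q^m - 1. -/

import Mathlib

/-!
Since `q ^ m ≡ 1`, both sides reduce to sums `q ^ a + q ^ b` and `q ^ ℓ₂ + 1` with all
exponents below `m`. These differ by less than `q ^ m - 1`, so the congruence is an equality of
integers, and reading it modulo `q` forces one of `a, b` to vanish and the other to be `ℓ₂`. With
`a = (s + ℓ₁) % m` and `b = s % m` this means `ℓ₁ ≡ ℓ₂` or `ℓ₁ + ℓ₂ ≡ 0 (mod m)`, both excluded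
by `ℓ₁ < ℓ₂` and `ℓ₁ + ℓ₂ < m`.
-/

namespace Nat

theorem pow_modEq_pow_mod {q : ℕ} (hq : 0 < q) (m a : ℕ) :
    q ^ a ≡ q ^ (a % m) [MOD q ^ m - 1] := by
  have hcycle : q ^ m ≡ 1 [MOD q ^ m - 1] := Nat.modEq_sub (Nat.one_le_pow _ _ hq)
  calc q ^ a = (q ^ m) ^ (a / m) * q ^ (a % m) := by
        rw [← pow_mul, ← pow_add, Nat.div_add_mod]
    _ ≡ 1 ^ (a / m) * q ^ (a % m) [MOD q ^ m - 1] := (hcycle.pow _).mul_right _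
    _ = q ^ (a % m) := by rw [one_pow, one_mul]

theorem pow_add_pow_eq_pow_add_one_of_modEq {q m a b c : ℕ} (hq : 2 ≤ q) (ha : a < m)
    (hb : b < m) (hc : c < m) (h : q ^ a + q ^ b ≡ q ^ c + 1 [MOD q ^ m - 1]) :
    q ^ a + q ^ b = q ^ c + 1 := by
  have hmono : ∀ {i}, i < m → 2 * q ^ i ≤ q ^ m := fun hi =>
    (Nat.mul_le_mul_right _ hq).trans (Nat.pow_succ' ▸ Nat.pow_le_pow_right (by omega) hi)
  have hpos : ∀ i, 1 ≤ q ^ i := fun i => Nat.one_le_pow _ _ (by omega)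
  have := hmono ha; have := hmono hb; have := hmono hc
  have := hpos a; have := hpos b; have := hpos c
  refine h.eq_of_abs_lt (abs_sub_lt_iff.mpr ⟨?_, ?_⟩) <;>
    simp only [Nat.cast_sub (hpos m), Nat.cast_add, Nat.cast_one] <;> omega

theorem pow_add_pow_eq_pow_add_one_iff {q a b c : ℕ} (hq : 2 ≤ q) (hc : 0 < c) :
    q ^ a + q ^ b = q ^ c + 1 ↔ a = 0 ∧ b = c ∨ a = c ∧ b = 0 := by
  refine ⟨fun h => ?_, by rintro (⟨rfl, rfl⟩ | ⟨rfl, rfl⟩) <;> simp [add_comm]⟩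
  rcases Nat.eq_zero_or_pos a with rfl | ha
  · exact .inl ⟨rfl, Nat.pow_right_injective hq (by simpa [add_comm] using h)⟩
  rcases Nat.eq_zero_or_pos b with rfl | hb
  · exact .inr ⟨Nat.pow_right_injective hq (by simpa using h), rfl⟩
  have hdvd : q ∣ q ^ c + 1 := h ▸ dvd_add (dvd_pow_self q ha.ne') (dvd_pow_self q hb.ne')
  have := Nat.le_of_dvd one_pos ((Nat.dvd_add_right (dvd_pow_self q hc.ne')).mp hdvd)
  omega

end Nat

theorem stmt_5_general (q m ℓ₁ ℓ₂ s : ℕ) (hq : 2 ≤ q) (h12 : ℓ₁ < ℓ₂)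
    (h2 : ℓ₂ < m / 2) :
    ¬ (q ^ s * (q ^ ℓ₁ + 1) ≡ q ^ ℓ₂ + 1 [MOD q ^ m - 1]) := by
  intro h
  have hm : 0 < m := by omega
  have hred : q ^ ((s + ℓ₁) % m) + q ^ (s % m) ≡ q ^ ℓ₂ + 1 [MOD q ^ m - 1] :=
    calc _ ≡ q ^ (s + ℓ₁) + q ^ s [MOD q ^ m - 1] :=
          ((Nat.pow_modEq_pow_mod (by omega) m _).add (Nat.pow_modEq_pow_mod (by omega) m _)).symm
      _ = q ^ s * (q ^ ℓ₁ + 1) := by ring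
      _ ≡ q ^ ℓ₂ + 1 [MOD q ^ m - 1] := h
  have heq := Nat.pow_add_pow_eq_pow_add_one_of_modEq hq (Nat.mod_lt _ hm) (Nat.mod_lt _ hm)
    (by omega) hred
  rcases (Nat.pow_add_pow_eq_pow_add_one_iff hq (by omega)).mp heq with ⟨ha, hb⟩ | ⟨ha, hb⟩
  · rw [← Nat.mod_add_mod, hb, Nat.mod_eq_of_lt (by omega)] at ha
    omega
  · rw [← Nat.mod_add_mod, hb, zero_add, Nat.mod_eq_of_lt (by omega)] at ha
    omega

/-- For 0 < ℓ₁ < ℓ₂ < m/2 and 0 ≤ s ≤ m-1, q ≥ 2: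
q^s(q^{ℓ₁}+1) ≢ q^{ℓ₂}+1 (mod q^m-1). -/
theorem stmt_5 (q m ℓ₁ ℓ₂ s : ℕ) (hq : 2 ≤ q) (h1 : 0 < ℓ₁) (h12 : ℓ₁ < ℓ₂)
    (h2 : ℓ₂ < m / 2) (hs : s ≤ m - 1) :
    ¬ (q ^ s * (q ^ ℓ₁ + 1) ≡ q ^ ℓ₂ + 1 [MOD q ^ m - 1]) :=
  stmt_5_general q m ℓ₁ ℓ₂ s hq h12 h2
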